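/- arXiv:math/0312095 — 4 statements merged into one kernel-verified Lean document; each statement's English description precedes it below -/
import Mathlib

section
/- Rearrangement identity: Let P ⊆ ℚ^d be a full-dimensional simple polytope, ξ ∈ (ℚ^d)^* generic, and v a vertex of P. Then (−1)^{ind_ξ(v)} · 1_{T^ξ_v P} = Σ_F (−1)^{dim F} · 1_{T_F P}, where the sum is over all faces F of P that contain v and on which ξ attains its maximum at v (i.e., ξ(x) ≤ ξ(v) for all x ∈ F). -/
noncomputable section
open Classical

open scoped BigOperators

/-- Indicator function of a set, with values in `ℤ`. -/
def indicator {d : ℕ} (S : Set (Fin d → ℚ)) (x : Fin d → ℚ) : ℤ :=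
  if x ∈ S then 1 else 0

/-- A polytope is the convex hull of a finite set of points. -/
def IsPolytope {d : ℕ} (P : Set (Fin d → ℚ)) : Prop :=
  ∃ T : Finset (Fin d → ℚ), P = convexHull ℚ (T : Set (Fin d → ℚ))

/-- A face of `P` is the set of maximizers of a linear functional over `P`. -/
def IsFace {d : ℕ} (P F : Set (Fin d → ℚ)) : Prop :=
  ∃ ℓ : Module.Dual ℚ (Fin d → ℚ), F = {x ∈ P | ∀ y ∈ P, ℓ y ≤ ℓ x}

/-- A vertex is a point whose singleton is a face. -/
def IsVertex {d : ℕ} (P : Set (Fin d → ℚ)) (v : Fin d → ℚ) : Prop :=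
  IsFace P {v}

/-- The tangent cone of `P` at a face `F`. -/
def tangentCone {d : ℕ} (P F : Set (Fin d → ℚ)) : Set (Fin d → ℚ) :=
  {y | ∃ f ∈ F, ∃ x : Fin d → ℚ, y = f + x ∧ ∃ ε : ℚ, 0 < ε ∧ f + ε • x ∈ P}

/-- The simplicial cone `v + ℚ_{≥0} t_1 + … + ℚ_{≥0} t_d`. -/
def simpleCone {d : ℕ} (v : Fin d → ℚ) (t : Fin d → Fin d → ℚ) : Set (Fin d → ℚ) :=
  {x | ∃ lam : Fin d → ℚ, (∀ i, 0 ≤ lam i) ∧ x = v + ∑ i, lam i • t i}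

/-- `P` is simple, with edge directions `t v` at each vertex `v`. -/
def IsSimpleWith {d : ℕ} (P : Set (Fin d → ℚ))
    (t : (Fin d → ℚ) → Fin d → Fin d → ℚ) : Prop :=
  ∀ v, IsVertex P v →
    LinearIndependent ℚ (t v) ∧ tangentCone P {v} = simpleCone v (t v)

/-- The polarized tangent cone
`v + Σ_{ξ(t_i)>0} ℚ_{≥0} t_i + Σ_{ξ(t_i)<0} ℚ_{<0} t_i`. -/
def polarizedCone {d : ℕ} (v : Fin d → ℚ) (t : Fin d → Fin d → ℚ)
    (ξ : Module.Dual ℚ (Fin d → ℚ)) : Set (Fin d → ℚ) :=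
  {x | ∃ lam : Fin d → ℚ, x = v + ∑ i, lam i • t i ∧
    ∀ i, (0 < ξ (t i) → 0 ≤ lam i) ∧ (ξ (t i) < 0 → lam i < 0)}

/-- The index of a vertex: the number of `ξ`-negative edge directions. -/
def indAt {d : ℕ} (ξ : Module.Dual ℚ (Fin d → ℚ)) (t : Fin d → Fin d → ℚ) : ℕ :=
  (Finset.univ.filter fun i => ξ (t i) < 0).card

/-- Dimension of the affine hull of a set. -/
def faceDim {d : ℕ} (F : Set (Fin d → ℚ)) : ℕ :=
  Module.finrank ℚ (affineSpan ℚ F).direction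

/-! At a simple vertex `v` with edge basis `B`, the cone condition puts `P` inside the orthant
`{x | 0 ≤ B.repr (x - v)}` and makes `P` fill that orthant near `v`. Hence the faces through `v`
are the sets `edgeFace P v B S`, cut out by the vanishing of the coordinates outside `S`; such a
face has dimension `#S`, its tangent cone is `{y | 0 ≤ B.repr (y - v) i for i ∉ S}`, and `ξ` is
maximal at `v` on it iff all edges in `S` are `ξ`-negative. With `c i` the indicator of
`0 ≤ B.repr (x - v) i` and `N` the set of negative edges, the right-hand side is then
`∑_{S ⊆ N} (-1)^#S ∏_{i ∉ S} c i = ∏_{i ∉ N} c i * ∏_{i ∈ N} (c i - 1)`, and `c i - 1` is minus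
the indicator of `B.repr (x - v) i < 0`, which gives the signed indicator of the polarized cone. -/

open Filter Topology Module

theorem eq_add_sum_smul_iff {ι R V : Type*} [Fintype ι] [Ring R] [AddCommGroup V] [Module R V]
    (B : Basis ι R V) (v x : V) (c : ι → R) :
    x = v + ∑ i, c i • B i ↔ ∀ i, B.repr (x - v) i = c i := by
  rw [← sub_eq_iff_eq_add', ← B.equivFun_symm_apply, LinearEquiv.eq_symm_apply, funext_iff]
  rfl

theorem apply_eq_add_sum_repr_mul {ι R V : Type*} [Fintype ι] [CommRing R] [AddCommGroup V]
    [Module R V] (B : Basis ι R V) (ℓ : Dual R V) (v x : V) :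
    ℓ x = ℓ v + ∑ i, B.repr (x - v) i * ℓ (B i) := by
  conv_lhs => rw [← add_sub_cancel v x, ← B.sum_repr (x - v)]
  simp [smul_eq_mul]

variable {d : ℕ}

theorem IsPolytope.convex {P : Set (Fin d → ℚ)} (hP : IsPolytope P) : Convex ℚ P := by
  obtain ⟨T, rfl⟩ := hP
  exact convex_convexHull ℚ _

theorem IsFace.subset {P F : Set (Fin d → ℚ)} (hF : IsFace P F) : F ⊆ P := by
  obtain ⟨ℓ, rfl⟩ := hF
  exact fun x hx => hx.1

theorem setOf_forall_le_eq_setOf_le {P : Set (Fin d → ℚ)} {v : Fin d → ℚ} (hvP : v ∈ P)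
    {ℓ : Dual ℚ (Fin d → ℚ)} (hmax : ∀ y ∈ P, ℓ y ≤ ℓ v) :
    {x ∈ P | ∀ y ∈ P, ℓ y ≤ ℓ x} = {x ∈ P | ℓ v ≤ ℓ x} := by
  ext x
  exact and_congr_right fun _ => ⟨fun h => h v hvP, fun h y hy => (hmax y hy).trans h⟩

theorem mem_simpleCone_iff (B : Basis (Fin d) ℚ (Fin d → ℚ)) (v x : Fin d → ℚ) :
    x ∈ simpleCone v B ↔ ∀ i, 0 ≤ B.repr (x - v) i := by
  constructor
  · rintro ⟨c, hc, hx⟩ i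
    rw [(eq_add_sum_smul_iff B v x c).1 hx i]
    exact hc i
  · intro hx
    exact ⟨fun i => B.repr (x - v) i, hx, (eq_add_sum_smul_iff B v x _).2 fun _ => rfl⟩

theorem mem_polarizedCone_iff (B : Basis (Fin d) ℚ (Fin d → ℚ)) (v x : Fin d → ℚ)
    {ξ : Dual ℚ (Fin d → ℚ)} (hξ : ∀ i, ξ (B i) ≠ 0) :
    x ∈ polarizedCone v B ξ ↔ ∀ i, (ξ (B i) < 0 ↔ B.repr (x - v) i < 0) := by
  have key : ∀ i (a : ℚ), ((0 < ξ (B i) → 0 ≤ a) ∧ (ξ (B i) < 0 → a < 0)) ↔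
      (ξ (B i) < 0 ↔ a < 0) := by
    intro i a
    rcases (hξ i).lt_or_gt with h | h
    · simp [h, h.not_gt]
    · simp [h, h.not_gt]
  constructor
  · rintro ⟨c, hx, hc⟩ i
    rw [(eq_add_sum_smul_iff B v x c).1 hx i]
    exact (key i _).1 (hc i)
  · intro hx
    exact ⟨fun i => B.repr (x - v) i, (eq_add_sum_smul_iff B v x _).2 fun _ => rfl,
      fun i => (key i _).2 (hx i)⟩

theorem mem_tangentCone_singleton_iff (P : Set (Fin d → ℚ)) (v y : Fin d → ℚ) :
    y ∈ tangentCone P {v} ↔ ∃ ε : ℚ, 0 < ε ∧ v + ε • (y - v) ∈ P := by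
  constructor
  · rintro ⟨f, rfl, x, rfl, hx⟩
    simpa using hx
  · rintro ⟨ε, hε, hmem⟩
    exact ⟨v, rfl, y - v, by abel, ε, hε, hmem⟩

section SimpleVertex

variable {P : Set (Fin d → ℚ)} {v : Fin d → ℚ} {B : Basis (Fin d) ℚ (Fin d → ℚ)}

theorem repr_sub_nonneg_of_mem (hcone : tangentCone P {v} = simpleCone v B)
    {x : Fin d → ℚ} (hx : x ∈ P) : ∀ i, 0 ≤ B.repr (x - v) i := by
  rw [← mem_simpleCone_iff, ← hcone, mem_tangentCone_singleton_iff]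
  exact ⟨1, one_pos, by simpa⟩

theorem exists_pos_add_smul_mem (hcone : tangentCone P {v} = simpleCone v B)
    {z : Fin d → ℚ} (hz : ∀ i, 0 ≤ B.repr z i) : ∃ ε : ℚ, 0 < ε ∧ v + ε • z ∈ P := by
  simpa using (mem_tangentCone_singleton_iff P v (v + z)).1
    (hcone ▸ (mem_simpleCone_iff B v (v + z)).2 (by simpa using hz))

theorem eventually_add_smul_mem (hconv : Convex ℚ P) (hvP : v ∈ P)
    (hcone : tangentCone P {v} = simpleCone v B) {z : Fin d → ℚ}
    (hz : ∀ i, 0 ≤ B.repr z i) : ∀ᶠ s in 𝓝[≥] (0 : ℚ), v + s • z ∈ P := by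
  obtain ⟨ε, hε, hmem⟩ := exists_pos_add_smul_mem hcone hz
  filter_upwards [Ico_mem_nhdsGE hε] with s ⟨hs0, hsε⟩
  have h := hconv.add_smul_sub_mem hvP hmem ⟨div_nonneg hs0 hε.le, (div_le_one hε).2 hsε.le⟩
  rwa [add_sub_cancel_left, smul_smul, div_mul_cancel₀ _ hε.ne'] at h

theorem exists_pos_add_smul_basis_mem (hcone : tangentCone P {v} = simpleCone v B)
    (i : Fin d) : ∃ ε : ℚ, 0 < ε ∧ v + ε • B i ∈ P :=
  exists_pos_add_smul_mem hcone fun j => by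
    rw [B.repr_self, Finsupp.single_apply]
    split_ifs <;> norm_num

def edgeFace (P : Set (Fin d → ℚ)) (v : Fin d → ℚ) (B : Basis (Fin d) ℚ (Fin d → ℚ))
    (S : Finset (Fin d)) : Set (Fin d → ℚ) :=
  {x ∈ P | ∀ i ∉ S, B.repr (x - v) i = 0}

theorem mem_edgeFace_self (hvP : v ∈ P) (S : Finset (Fin d)) : v ∈ edgeFace P v B S :=
  ⟨hvP, fun i _ => by simp⟩

theorem exists_pos_add_smul_basis_mem_edgeFace (hcone : tangentCone P {v} = simpleCone v B)
    {S : Finset (Fin d)} {i : Fin d} (hi : i ∈ S) :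
    ∃ ε : ℚ, 0 < ε ∧ v + ε • B i ∈ edgeFace P v B S := by
  obtain ⟨ε, hε, hmem⟩ := exists_pos_add_smul_basis_mem hcone i
  refine ⟨ε, hε, hmem, fun j hj => ?_⟩
  rw [add_sub_cancel_left, map_smul, B.repr_self, Finsupp.smul_apply,
    Finsupp.single_eq_of_ne (by rintro rfl; exact hj hi), smul_zero]

theorem edgeFace_injective (hcone : tangentCone P {v} = simpleCone v B) :
    Function.Injective (edgeFace P v B) := by
  have subset_of_eq : ∀ S T, edgeFace P v B S = edgeFace P v B T → S ⊆ T := by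
    intro S T hST i hi
    obtain ⟨ε, hε, hmem⟩ := exists_pos_add_smul_basis_mem_edgeFace hcone hi
    by_contra hiT
    have h := (hST ▸ hmem).2 i hiT
    simp [hε.ne'] at h
  exact fun S T hST => (subset_of_eq S T hST).antisymm (subset_of_eq T S hST.symm)

theorem isFace_edgeFace (hvP : v ∈ P) (hcone : tangentCone P {v} = simpleCone v B)
    (S : Finset (Fin d)) : IsFace P (edgeFace P v B S) := by
  set ℓ : Dual ℚ (Fin d → ℚ) := -∑ i ∈ Sᶜ, B.coord i
  have hℓ : ∀ x, ℓ x = ℓ v - ∑ i ∈ Sᶜ, B.repr (x - v) i := by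
    intro x
    simp only [ℓ, LinearMap.neg_apply, LinearMap.coe_sum, Finset.sum_apply, Basis.coord_apply,
      map_sub, Finsupp.coe_sub, Pi.sub_apply, Finset.sum_sub_distrib]
    ring
  have hnonneg : ∀ x ∈ P, ∀ i ∈ Sᶜ, 0 ≤ B.repr (x - v) i :=
    fun x hx i _ => repr_sub_nonneg_of_mem hcone hx i
  have hmax : ∀ y ∈ P, ℓ y ≤ ℓ v := fun y hy => by
    rw [hℓ y, sub_le_self_iff]
    exact Finset.sum_nonneg (hnonneg y hy)
  refine ⟨ℓ, ?_⟩
  rw [setOf_forall_le_eq_setOf_le hvP hmax]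
  ext x
  refine and_congr_right fun hx => ?_
  rw [hℓ x, le_sub_self_iff, (Finset.sum_nonneg (hnonneg x hx)).ge_iff_eq',
    Finset.sum_eq_zero_iff_of_nonneg (hnonneg x hx)]
  simp

theorem exists_edgeFace_eq (hcone : tangentCone P {v} = simpleCone v B)
    {F : Set (Fin d → ℚ)} (hF : IsFace P F) (hvF : v ∈ F) :
    ∃ S, F = edgeFace P v B S := by
  obtain ⟨ℓ, rfl⟩ := hF
  have hvP : v ∈ P := hvF.1
  have hmax : ∀ y ∈ P, ℓ y ≤ ℓ v := hvF.2
  have hedge : ∀ i, ℓ (B i) ≤ 0 := by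
    intro i
    obtain ⟨ε, hε, hmem⟩ := exists_pos_add_smul_basis_mem hcone i
    have h := hmax _ hmem
    rw [map_add, map_smul, smul_eq_mul, add_le_iff_nonpos_right] at h
    exact nonpos_of_mul_nonpos_right h hε
  refine ⟨Finset.univ.filter fun i => ℓ (B i) = 0, ?_⟩
  rw [setOf_forall_le_eq_setOf_le hvP hmax]
  ext x
  refine and_congr_right fun hx => ?_
  have hterm : ∀ i ∈ Finset.univ, B.repr (x - v) i * ℓ (B i) ≤ 0 :=
    fun i _ => mul_nonpos_of_nonneg_of_nonpos (repr_sub_nonneg_of_mem hcone hx i) (hedge i)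
  rw [apply_eq_add_sum_repr_mul B ℓ v x, le_add_iff_nonneg_right,
    (Finset.sum_nonpos hterm).ge_iff_eq, Finset.sum_eq_zero_iff_of_nonpos hterm]
  simp [or_iff_not_imp_right]

theorem forall_le_on_edgeFace_iff (hcone : tangentCone P {v} = simpleCone v B)
    {ξ : Dual ℚ (Fin d → ℚ)} (hξ : ∀ i, ξ (B i) ≠ 0) (S : Finset (Fin d)) :
    (∀ y ∈ edgeFace P v B S, ξ y ≤ ξ v) ↔ ∀ i ∈ S, ξ (B i) < 0 := by
  constructor
  · intro h i hi
    obtain ⟨ε, hε, hmem⟩ := exists_pos_add_smul_basis_mem_edgeFace hcone hi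
    have hle := h _ hmem
    rw [map_add, map_smul, smul_eq_mul, add_le_iff_nonpos_right] at hle
    exact (nonpos_of_mul_nonpos_right hle hε).lt_of_ne (hξ i)
  · rintro h y ⟨hy, hyS⟩
    rw [apply_eq_add_sum_repr_mul B ξ v y, add_le_iff_nonpos_right]
    refine Finset.sum_nonpos fun i _ => ?_
    by_cases hi : i ∈ S
    · exact mul_nonpos_of_nonneg_of_nonpos (repr_sub_nonneg_of_mem hcone hy i) (h i hi).le
    · rw [hyS i hi, zero_mul]

theorem tangentCone_edgeFace_subset (hcone : tangentCone P {v} = simpleCone v B)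
    (S : Finset (Fin d)) :
    tangentCone P (edgeFace P v B S) ⊆ {y | ∀ i ∉ S, 0 ≤ B.repr (y - v) i} := by
  rintro _ ⟨f, ⟨-, hf⟩, x, rfl, ε, hε, hfx⟩ i hi
  have h := repr_sub_nonneg_of_mem hcone hfx i
  rw [add_sub_right_comm, map_add, Finsupp.add_apply, hf i hi, zero_add] at h ⊢
  rw [map_smul, Finsupp.smul_apply, smul_eq_mul] at h
  exact nonneg_of_mul_nonneg_right h hε

theorem subset_tangentCone_edgeFace (hconv : Convex ℚ P) (hvP : v ∈ P)
    (hcone : tangentCone P {v} = simpleCone v B) (S : Finset (Fin d)) :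
    {y | ∀ i ∉ S, 0 ≤ B.repr (y - v) i} ⊆ tangentCone P (edgeFace P v B S) := by
  intro y hy
  obtain ⟨u, rfl⟩ : ∃ u, y = v + u := ⟨y - v, by abel⟩
  simp only [Set.mem_ofPred_eq, add_sub_cancel_left] at hy
  set w := B.equivFun.symm fun i => if i ∈ S then 1 else 0
  have hw : ∀ i, B.repr w i = if i ∈ S then 1 else 0 := fun i => by
    rw [← B.equivFun_apply, LinearEquiv.apply_symm_apply]
  set M := ∑ i, |B.repr u i|
  have hM0 : 0 ≤ M := Finset.sum_nonneg fun _ _ => abs_nonneg _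
  have hM : ∀ i, 0 ≤ M + B.repr u i := fun i => by
    have := Finset.single_le_sum (f := fun i => |B.repr u i|) (fun _ _ => abs_nonneg _)
      (Finset.mem_univ i)
    linarith [neg_abs_le (B.repr u i)]
  -- `M • w + u` lies in the cone; the witness is `f = v + δ • w` with `δ * (1 - η) = η * M`,
  -- for which `f + η • (y - f) = v + η • (M • w + u)`.
  have hnear : ∀ᶠ η in 𝓝[>] (0 : ℚ), v + η • (M • w + u) ∈ P := by
    refine nhdsWithin_mono _ Set.Ioi_subset_Ici_self
      (eventually_add_smul_mem hconv hvP hcone fun i => ?_)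
    by_cases hi : i ∈ S <;> simp [hw, hi, hM i, hy i]
  have hδ : Tendsto (fun η : ℚ => η * M / (1 - η)) (𝓝[>] 0) (𝓝[≥] 0) := by
    refine tendsto_nhdsWithin_iff.2 ⟨?_, ?_⟩
    · refine tendsto_nhdsWithin_of_tendsto_nhds ?_
      have : ContinuousAt (fun η : ℚ => η * M / (1 - η)) 0 := by fun_prop (disch := norm_num)
      simpa using this.tendsto
    · filter_upwards [Ioo_mem_nhdsGT one_pos] with η ⟨hη0, hη1⟩
      exact div_nonneg (mul_nonneg hη0.le hM0) (sub_nonneg.2 hη1.le)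
  have hface : ∀ᶠ η in 𝓝[>] (0 : ℚ), v + (η * M / (1 - η)) • w ∈ P :=
    hδ.eventually (eventually_add_smul_mem hconv hvP hcone fun i => by
      by_cases hi : i ∈ S <;> simp [hw, hi])
  obtain ⟨η, ⟨hηP, hfP, hη1⟩, hη0⟩ :=
    ((hnear.and (hface.and (Ioo_mem_nhdsGT one_pos))).and self_mem_nhdsWithin).exists
  refine ⟨v + (η * M / (1 - η)) • w, ⟨hfP, fun i hi => ?_⟩, _, (add_sub_cancel _ _).symm,
    η, hη0, ?_⟩
  · simp [hw, hi]
  · have h : η * M / (1 - η) * (1 - η) = η * M := div_mul_cancel₀ _ (sub_ne_zero.2 hη1.2.ne')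
    convert hηP using 1
    linear_combination (norm := module) h • w

theorem tangentCone_edgeFace (hconv : Convex ℚ P) (hvP : v ∈ P)
    (hcone : tangentCone P {v} = simpleCone v B) (S : Finset (Fin d)) :
    tangentCone P (edgeFace P v B S) = {y | ∀ i ∉ S, 0 ≤ B.repr (y - v) i} :=
  (tangentCone_edgeFace_subset hcone S).antisymm (subset_tangentCone_edgeFace hconv hvP hcone S)

theorem faceDim_edgeFace (hvP : v ∈ P) (hcone : tangentCone P {v} = simpleCone v B)
    (S : Finset (Fin d)) : faceDim (edgeFace P v B S) = S.card := by
  have hspan : (affineSpan ℚ (edgeFace P v B S)).direction =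
      Submodule.span ℚ (Set.range fun i : S => B i) := by
    rw [direction_affineSpan, vectorSpan_eq_span_vsub_set_right ℚ (mem_edgeFace_self hvP S)]
    apply le_antisymm <;> rw [Submodule.span_le]
    · rintro _ ⟨x, ⟨-, hx⟩, rfl⟩
      change x - v ∈ _
      rw [← B.sum_repr (x - v),
        ← Finset.sum_subset (Finset.subset_univ S) fun i _ hi => by rw [hx i hi, zero_smul]]
      exact Submodule.sum_mem _ fun i hi =>
        Submodule.smul_mem _ _ (Submodule.subset_span ⟨⟨i, hi⟩, rfl⟩)
    · rintro _ ⟨⟨i, hi⟩, rfl⟩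
      obtain ⟨ε, hε, hmem⟩ := exists_pos_add_smul_basis_mem_edgeFace hcone hi
      have hBi : B i = ε⁻¹ • ((v + ε • B i) -ᵥ v) := by
        rw [vsub_eq_sub, add_sub_cancel_left, smul_smul, inv_mul_cancel₀ hε.ne', one_smul]
      change B i ∈ _
      rw [hBi]
      exact Submodule.smul_mem _ _ (Submodule.subset_span ⟨_, hmem, rfl⟩)
  rw [faceDim, hspan, finrank_span_eq_card (b := fun i : S => B i)
    (B.linearIndependent.comp _ Subtype.val_injective), Fintype.card_coe]

end SimpleVertex

theorem setOf_faces_eq_image {P : Set (Fin d → ℚ)} {v : Fin d → ℚ}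
    {B : Basis (Fin d) ℚ (Fin d → ℚ)} (hvP : v ∈ P) (hcone : tangentCone P {v} = simpleCone v B)
    {ξ : Dual ℚ (Fin d → ℚ)} (hξ : ∀ i, ξ (B i) ≠ 0) :
    {F | IsFace P F ∧ v ∈ F ∧ ∀ y ∈ F, ξ y ≤ ξ v} =
      edgeFace P v B '' ↑(Finset.univ.filter fun i => ξ (B i) < 0).powerset := by
  ext F
  constructor
  · rintro ⟨hF, hvF, hmax⟩
    obtain ⟨S, rfl⟩ := exists_edgeFace_eq hcone hF hvF
    refine ⟨S, Finset.mem_powerset.2 fun i hi => ?_, rfl⟩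
    simpa using (forall_le_on_edgeFace_iff hcone hξ S).1 hmax i hi
  · rintro ⟨S, hS, rfl⟩
    refine ⟨isFace_edgeFace hvP hcone S, mem_edgeFace_self hvP S,
      (forall_le_on_edgeFace_iff hcone hξ S).2 fun i hi => ?_⟩
    simpa using Finset.mem_powerset.1 hS hi

theorem sum_powerset_neg_one_pow_mul_boole {ι : Type*} [Fintype ι] [DecidableEq ι]
    (N : Finset ι) (p : ι → Prop) [DecidablePred p] :
    ∑ S ∈ N.powerset, (-1 : ℤ) ^ S.card * (if ∀ i ∉ S, p i then 1 else 0) =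
      (-1) ^ N.card * if ∀ i, i ∈ N ↔ ¬ p i then 1 else 0 := by
  have hsplit : ∀ S ∈ N.powerset, (-1 : ℤ) ^ S.card * (if ∀ i ∉ S, p i then 1 else 0) =
      ((∏ _i ∈ S, (-1 : ℤ)) * ∏ i ∈ N \ S, if p i then 1 else 0) *
        ∏ i ∈ Nᶜ, if p i then 1 else 0 := by
    intro S hS
    rw [Finset.prod_const, mul_assoc, ← compl_sdiff_compl,
      Finset.prod_sdiff (Finset.compl_subset_compl.2 (Finset.mem_powerset.1 hS)),
      Finset.prod_boole]
    simp
  calc ∑ S ∈ N.powerset, (-1 : ℤ) ^ S.card * (if ∀ i ∉ S, p i then 1 else 0)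
      = (∏ i ∈ N, (-1 + if p i then 1 else 0)) * ∏ i ∈ Nᶜ, if p i then 1 else 0 := by
        rw [Finset.sum_congr rfl hsplit, ← Finset.sum_mul, Finset.prod_add]
    _ = (-1) ^ N.card * ((∏ i ∈ N, if ¬ p i then 1 else 0) * ∏ i ∈ Nᶜ, if p i then 1 else 0) := by
        rw [← mul_assoc, ← Finset.prod_const, ← Finset.prod_mul_distrib]
        congr 2 with i
        split_ifs <;> norm_num
    _ = (-1) ^ N.card * if ∀ i, i ∈ N ↔ ¬ p i then 1 else 0 := by
        rw [Finset.prod_boole, Finset.prod_boole, ite_zero_mul_ite_zero, one_mul]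
        simp only [Finset.mem_compl]
        congr 2
        exact propext ⟨fun h i => ⟨h.1 i, fun hp => by_contra fun hi => hp (h.2 i hi)⟩,
          fun h => ⟨fun i => (h i).1, fun i hi => not_not.1 (mt (h i).2 hi)⟩⟩

theorem rearrangement_general {d : ℕ} (P : Set (Fin d → ℚ))
    (hP : IsPolytope P)
    (t : (Fin d → ℚ) → Fin d → Fin d → ℚ) (hsimple : IsSimpleWith P t)
    (ξ : Module.Dual ℚ (Fin d → ℚ))
    (hgen : ∀ v, IsVertex P v → ∀ i, ξ (t v i) ≠ 0)
    (v : Fin d → ℚ) (hv : IsVertex P v) :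
    ∀ x : Fin d → ℚ,
      (-1 : ℤ) ^ indAt ξ (t v) * indicator (polarizedCone v (t v) ξ) x =
        ∑ᶠ F ∈ {F : Set (Fin d → ℚ) | IsFace P F ∧ v ∈ F ∧ ∀ y ∈ F, ξ y ≤ ξ v},
          (-1 : ℤ) ^ faceDim F * indicator (tangentCone P F) x := by
  intro x
  obtain ⟨hli, hcone⟩ := hsimple v hv
  set B := Basis.mk hli (hli.span_eq_top_of_card_eq_finrank' (by simp)).ge
  have hB : ⇑B = t v := Basis.coe_mk _ _
  have hξ : ∀ i, ξ (B i) ≠ 0 := hB ▸ hgen v hv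
  have hvP : v ∈ P := hv.subset rfl
  rw [← hB] at hcone ⊢
  rw [setOf_faces_eq_image hvP hcone hξ, finsum_mem_image (edgeFace_injective hcone).injOn,
    finsum_mem_coe_finset]
  simp only [faceDim_edgeFace hvP hcone, tangentCone_edgeFace hP.convex hvP hcone, indicator,
    Set.mem_ofPred_eq, mem_polarizedCone_iff B v x hξ]
  rw [eq_comm]
  convert sum_powerset_neg_one_pow_mul_boole _ (fun i => 0 ≤ B.repr (x - v) i) using 3
  · congr 1
  · rfl
  · simp [not_le]

/-- **Rearrangement identity**: the signed indicator of the polarized tangent cone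
at a vertex `v` equals the alternating sum of the indicators of the tangent cones of
the faces containing `v` on which `ξ` attains its maximum at `v`. -/
theorem rearrangement {d : ℕ} (hd : 1 ≤ d) (P : Set (Fin d → ℚ))
    (hP : IsPolytope P) (hfull : affineSpan ℚ P = ⊤)
    (t : (Fin d → ℚ) → Fin d → Fin d → ℚ) (hsimple : IsSimpleWith P t)
    (ξ : Module.Dual ℚ (Fin d → ℚ))
    (hgen : ∀ v, IsVertex P v → ∀ i, ξ (t v i) ≠ 0)
    (v : Fin d → ℚ) (hv : IsVertex P v) :
    ∀ x : Fin d → ℚ,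
      (-1 : ℤ) ^ indAt ξ (t v) * indicator (polarizedCone v (t v) ξ) x =
        ∑ᶠ F ∈ {F : Set (Fin d → ℚ) | IsFace P F ∧ v ∈ F ∧ ∀ y ∈ F, ξ y ≤ ξ v},
          (-1 : ℤ) ^ faceDim F * indicator (tangentCone P F) x :=
  rearrangement_general P hP t hsimple ξ hgen v hv
end
end

section
/- Independence of the polarizing functional modulo cones with lines: Let P ⊆ ℚ^d be a full-dimensional simple polytope, v a vertex of P, and ξ_1, ξ_2 ∈ (ℚ^d)^* both generic. Then (−1)^{ind_{ξ_1}(v)} · 1_{T^{ξ_1}_v P} − (−1)^{ind_{ξ_2}(v)} · 1_{T^{ξ_2}_v P} is a finite integer linear combination of indicator functions of convex cones each of which contains an affine line. -/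
noncomputable section
open Classical

open scoped BigOperators

/-- `K` contains an affine line. -/
def ContainsLine {d : ℕ} (K : Set (Fin d → ℚ)) : Prop :=
  ∃ x ∈ K, ∃ u : Fin d → ℚ, u ≠ 0 ∧ ∀ lam : ℚ, x + lam • u ∈ K

/-- `K` is a convex cone with apex `a`. -/
def IsConvexConeAt {d : ℕ} (a : Fin d → ℚ) (K : Set (Fin d → ℚ)) : Prop :=
  Convex ℚ K ∧ ∀ x ∈ K, ∀ lam : ℚ, 0 < lam → a + lam • (x - a) ∈ K

/-! In the coordinates `x = v + ∑ cᵢ tᵢ` given by the edge directions at `v`,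
`(-1)^{ind_ξ(v)} · 1_{T^ξ_v P}` is the product over `i` of `1[cᵢ ≥ 0] - 1[ξ(tᵢ) < 0]`.
Expanding the product writes it as a sum over subsets `S` of the indicators of the cones
`{cᵢ ≥ 0 for i ∉ S}` with coefficients `∏_{i ∈ S} -1[ξ(tᵢ) < 0]`. Only the term `S = ∅`, the
tangent cone itself with coefficient `1`, survives for every `ξ`, so it cancels in the
difference; every other cone contains the lines `v + ℚ tᵢ` for `i ∈ S`. -/

open Finset

theorem neg_one_pow_card_mul_boole_eq_sum_powerset {ι : Type*} [Fintype ι] (p : ι → Prop)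
    (N : Finset ι) :
    (-1 : ℤ) ^ #N * (if ∀ i, (p i ↔ i ∉ N) then 1 else 0) =
      ∑ S ∈ univ.powerset,
        (∏ i ∈ S, -(if i ∈ N then 1 else 0)) * (if ∀ i ∉ S, p i then 1 else 0) := by
  have hsign : (-1 : ℤ) ^ #N = ∏ i, if i ∈ N then -1 else 1 := by
    rw [prod_ite_mem, univ_inter, prod_const]
  have hboole : (if ∀ i, (p i ↔ i ∉ N) then 1 else 0 : ℤ) =
      ∏ i, if (p i ↔ i ∉ N) then 1 else 0 := by
    rw [prod_boole]; simp
  calc (-1 : ℤ) ^ #N * (if ∀ i, (p i ↔ i ∉ N) then 1 else 0)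
      = ∏ i, (-(if i ∈ N then 1 else 0) + if p i then 1 else 0) := by
        rw [hsign, hboole, ← prod_mul_distrib]
        refine prod_congr rfl fun i _ => ?_
        by_cases hN : i ∈ N <;> by_cases hp : p i <;> simp [hN, hp]
    _ = _ := by
        rw [prod_add]
        refine sum_congr rfl fun S _ => ?_
        rw [prod_boole]
        simp

theorem LinearIndependent.exists_add_sum_smul_and_iff {R V ι : Type*} [Ring R]
    [AddCommGroup V] [Module R V] [Fintype ι] {t : ι → V} (ht : LinearIndependent R t)
    {v x : V} {c : ι → R} (hx : x = v + ∑ i, c i • t i) (Q : (ι → R) → Prop) :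
    (∃ lam : ι → R, x = v + ∑ i, lam i • t i ∧ Q lam) ↔ Q c := by
  refine ⟨fun ⟨lam, hlam, hQ⟩ => ?_, fun hQ => ⟨c, hx, hQ⟩⟩
  have : lam = c := funext <| Fintype.linearIndependent_iffₛ.mp ht lam c <| by
    rw [hlam] at hx; exact add_left_cancel hx
  exact this ▸ hQ

def coneFreeOn {d : ℕ} {ι : Type*} [Fintype ι] (v : Fin d → ℚ) (t : ι → Fin d → ℚ)
    (S : Finset ι) : Set (Fin d → ℚ) :=
  {x | ∃ lam : ι → ℚ, x = v + ∑ i, lam i • t i ∧ ∀ i ∉ S, 0 ≤ lam i}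

section Cones

variable {d : ℕ} {ι : Type*} [Fintype ι] {v : Fin d → ℚ} {t : ι → Fin d → ℚ}

theorem isConvexConeAt_coneFreeOn (S : Finset ι) : IsConvexConeAt v (coneFreeOn v t S) := by
  refine ⟨?_, ?_⟩
  · rintro _ ⟨lx, rfl, hlx⟩ _ ⟨ly, rfl, hly⟩ a b ha hb hab
    refine ⟨a • lx + b • ly, ?_, fun i hi => ?_⟩
    · simp only [Pi.add_apply, Pi.smul_apply, smul_eq_mul, add_smul, mul_smul, sum_add_distrib,
        ← smul_sum, smul_add]
      rw [add_add_add_comm, ← add_smul, hab, one_smul]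
    · simp only [Pi.add_apply, Pi.smul_apply, smul_eq_mul]
      exact add_nonneg (mul_nonneg ha (hlx i hi)) (mul_nonneg hb (hly i hi))
  · rintro _ ⟨lx, rfl, hlx⟩ r hr
    refine ⟨r • lx, ?_, fun i hi => mul_nonneg hr.le (hlx i hi)⟩
    simp only [add_sub_cancel_left, smul_sum, Pi.smul_apply, smul_eq_mul, mul_smul]

theorem containsLine_coneFreeOn (ht : ∀ i, t i ≠ 0) {S : Finset ι} (hS : S.Nonempty) :
    ContainsLine (coneFreeOn v t S) := by
  obtain ⟨j, hj⟩ := hS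
  refine ⟨v, ⟨0, by simp, fun _ _ => le_rfl⟩, t j, ht j, fun r => ?_⟩
  refine ⟨Pi.single j r, by simp [Pi.single_apply], fun i hi => ?_⟩
  rw [Pi.single_eq_of_ne (ne_of_mem_of_not_mem hj hi).symm]

end Cones

section Indicators

variable {d : ℕ} {v x : Fin d → ℚ} {t : Fin d → Fin d → ℚ} {c : Fin d → ℚ}

theorem indicator_coneFreeOn (ht : LinearIndependent ℚ t) (hx : x = v + ∑ i, c i • t i)
    (S : Finset (Fin d)) :
    indicator (coneFreeOn v t S) x = if ∀ i ∉ S, 0 ≤ c i then 1 else 0 := by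
  simp only [indicator, coneFreeOn, Set.mem_ofPred_eq,
    ht.exists_add_sum_smul_and_iff hx fun lam => ∀ i ∉ S, 0 ≤ lam i]

theorem indicator_polarizedCone {ξ : Module.Dual ℚ (Fin d → ℚ)} (ht : LinearIndependent ℚ t)
    (hξ : ∀ i, ξ (t i) ≠ 0) (hx : x = v + ∑ i, c i • t i) :
    indicator (polarizedCone v t ξ) x =
      if ∀ i, (0 ≤ c i ↔ i ∉ univ.filter fun i => ξ (t i) < 0) then 1 else 0 := by
  simp only [indicator, polarizedCone, Set.mem_ofPred_eq,
    ht.exists_add_sum_smul_and_iff hx fun lam =>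
      ∀ i, (0 < ξ (t i) → 0 ≤ lam i) ∧ (ξ (t i) < 0 → lam i < 0)]
  congr 1
  refine propext (forall_congr' fun i => ?_)
  rcases (hξ i).lt_or_gt with hneg | hpos
  · simp [hneg, not_lt_of_gt hneg]
  · simp [hpos, not_lt_of_gt hpos]

def polarizationCoeff {d : ℕ} (ξ : Module.Dual ℚ (Fin d → ℚ)) (t : Fin d → Fin d → ℚ)
    (S : Finset (Fin d)) : ℤ :=
  ∏ i ∈ S, -(if ξ (t i) < 0 then 1 else 0)

theorem signed_indicator_polarizedCone_eq_sum {ξ : Module.Dual ℚ (Fin d → ℚ)}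
    (ht : LinearIndependent ℚ t) (hξ : ∀ i, ξ (t i) ≠ 0) (x : Fin d → ℚ) :
    (-1 : ℤ) ^ indAt ξ t * indicator (polarizedCone v t ξ) x =
      ∑ S ∈ univ.powerset, polarizationCoeff ξ t S * indicator (coneFreeOn v t S) x := by
  by_cases hspan : ∃ c : Fin d → ℚ, x = v + ∑ i, c i • t i
  · obtain ⟨c, hx⟩ := hspan
    simp only [indicator_polarizedCone ht hξ hx, indicator_coneFreeOn ht hx, indAt,
      polarizationCoeff]
    convert neg_one_pow_card_mul_boole_eq_sum_powerset (fun i => 0 ≤ c i) _ using 5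
    simp
  · have hnot : ∀ K : Set (Fin d → ℚ), (x ∈ K → ∃ c : Fin d → ℚ, x = v + ∑ i, c i • t i) →
        indicator K x = 0 := fun K hK => if_neg fun hxK => hspan (hK hxK)
    rw [hnot _ (by rintro ⟨c, hc, -⟩; exact ⟨c, hc⟩), mul_zero]
    exact (sum_eq_zero fun S _ => by
      rw [hnot _ (by rintro ⟨c, hc, -⟩; exact ⟨c, hc⟩), mul_zero]).symm

end Indicators

theorem signed_indicator_polarizedCone_sub_eq_sum {d : ℕ} {v : Fin d → ℚ}
    {t : Fin d → Fin d → ℚ} {ξ₁ ξ₂ : Module.Dual ℚ (Fin d → ℚ)} (ht : LinearIndependent ℚ t)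
    (hξ₁ : ∀ i, ξ₁ (t i) ≠ 0) (hξ₂ : ∀ i, ξ₂ (t i) ≠ 0) (x : Fin d → ℚ) :
    (-1 : ℤ) ^ indAt ξ₁ t * indicator (polarizedCone v t ξ₁) x -
        (-1 : ℤ) ^ indAt ξ₂ t * indicator (polarizedCone v t ξ₂) x =
      ∑ S ∈ univ.powerset.erase ∅,
        (polarizationCoeff ξ₁ t S - polarizationCoeff ξ₂ t S) * indicator (coneFreeOn v t S) x := by
  rw [signed_indicator_polarizedCone_eq_sum ht hξ₁, signed_indicator_polarizedCone_eq_sum ht hξ₂,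
    ← sum_sub_distrib, sum_erase]
  · exact sum_congr rfl fun S _ => (sub_mul _ _ _).symm
  · simp [polarizationCoeff]

theorem exists_fin_sum_indicator_eq {d : ℕ} {α : Type*} (s : Finset α)
    (K : α → Set (Fin d → ℚ)) (c : α → ℤ) {p : Set (Fin d → ℚ) → Prop}
    (hp : ∀ a ∈ s, p (K a)) :
    ∃ (m : ℕ) (K' : Fin m → Set (Fin d → ℚ)) (c' : Fin m → ℤ), (∀ j, p (K' j)) ∧
      ∀ x, ∑ a ∈ s, c a * indicator (K a) x = ∑ j, c' j * indicator (K' j) x := by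
  refine ⟨s.card, fun j => K (s.equivFin.symm j), fun j => c (s.equivFin.symm j),
    fun j => hp _ (s.equivFin.symm j).2, fun x => ?_⟩
  rw [← sum_attach s]
  exact (s.equivFin.symm.sum_comp fun a => c a * indicator (K a) x).symm

theorem polarized_cones_indep_of_xi_general {d : ℕ} (P : Set (Fin d → ℚ))
    (t : (Fin d → ℚ) → Fin d → Fin d → ℚ) (hsimple : IsSimpleWith P t)
    (ξ₁ ξ₂ : Module.Dual ℚ (Fin d → ℚ))
    (hgen₁ : ∀ v, IsVertex P v → ∀ i, ξ₁ (t v i) ≠ 0)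
    (hgen₂ : ∀ v, IsVertex P v → ∀ i, ξ₂ (t v i) ≠ 0)
    (v : Fin d → ℚ) (hv : IsVertex P v) :
    ∃ (m : ℕ) (K : Fin m → Set (Fin d → ℚ)) (c : Fin m → ℤ),
      (∀ j, (∃ a, IsConvexConeAt a (K j)) ∧ ContainsLine (K j)) ∧
      ∀ x : Fin d → ℚ,
        (-1 : ℤ) ^ indAt ξ₁ (t v) * indicator (polarizedCone v (t v) ξ₁) x -
          (-1 : ℤ) ^ indAt ξ₂ (t v) * indicator (polarizedCone v (t v) ξ₂) x =
        ∑ j, c j * indicator (K j) x := by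
  have ht := (hsimple v hv).1
  obtain ⟨m, K, c, hK, hsum⟩ := exists_fin_sum_indicator_eq (univ.powerset.erase ∅)
    (coneFreeOn v (t v))
    (fun S => polarizationCoeff ξ₁ (t v) S - polarizationCoeff ξ₂ (t v) S)
    (p := fun K => (∃ a, IsConvexConeAt a K) ∧ ContainsLine K)
    fun S hS => ⟨⟨v, isConvexConeAt_coneFreeOn S⟩,
      containsLine_coneFreeOn ht.ne_zero (nonempty_iff_ne_empty.mpr (ne_of_mem_erase hS))⟩
  refine ⟨m, K, c, hK, fun x => ?_⟩
  rw [signed_indicator_polarizedCone_sub_eq_sum ht (hgen₁ v hv) (hgen₂ v hv), hsum]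

/-- **Independence of the polarizing functional modulo cones with lines**: for a vertex
`v` of a simple polytope and two generic functionals `ξ₁, ξ₂`, the difference of the
signed indicators of the two polarized tangent cones is an integer linear combination
of indicators of convex cones, each containing an affine line. -/
theorem polarized_cones_indep_of_xi {d : ℕ} (hd : 1 ≤ d) (P : Set (Fin d → ℚ))
    (hP : IsPolytope P) (hfull : affineSpan ℚ P = ⊤)
    (t : (Fin d → ℚ) → Fin d → Fin d → ℚ) (hsimple : IsSimpleWith P t)
    (ξ₁ ξ₂ : Module.Dual ℚ (Fin d → ℚ))
    (hgen₁ : ∀ v, IsVertex P v → ∀ i, ξ₁ (t v i) ≠ 0)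
    (hgen₂ : ∀ v, IsVertex P v → ∀ i, ξ₂ (t v i) ≠ 0)
    (v : Fin d → ℚ) (hv : IsVertex P v) :
    ∃ (m : ℕ) (K : Fin m → Set (Fin d → ℚ)) (c : Fin m → ℤ),
      (∀ j, (∃ a, IsConvexConeAt a (K j)) ∧ ContainsLine (K j)) ∧
      ∀ x : Fin d → ℚ,
        (-1 : ℤ) ^ indAt ξ₁ (t v) * indicator (polarizedCone v (t v) ξ₁) x -
          (-1 : ℤ) ^ indAt ξ₂ (t v) * indicator (polarizedCone v (t v) ξ₂) x =
        ∑ j, c j * indicator (K j) x :=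
  polarized_cones_indep_of_xi_general P t hsimple ξ₁ ξ₂ hgen₁ hgen₂ v hv
end
end

section
/- Tangent cone as intersection over a subdivision of the normal cone: Let P ⊆ ℚ^d be a full-dimensional polytope, v a vertex, and N_v = {n ∈ (ℚ^d)^* : n(x) ≥ n(v) for all x ∈ P} its normal cone. Suppose σ_1,…,σ_M ⊆ (ℚ^d)^* are cones, each generated by finitely many elements of N_v, whose union is N_v. Then the tangent cone satisfies T_v P = ∩_{i=1}^M T_{σ_i}, where T_{σ_i} = {x ∈ ℚ^d : n(x) ≥ n(v) for all n ∈ σ_i}. -/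
/-! The inequality `n v ≤ n y` for `y ∈ T_v P` and `n ∈ N_v` is immediate. Conversely, if
`P = conv T` and `v ∈ P`, every direction in the cone generated by `T - v` points into `P` for a
short while, by convexity. If `y - v` is not in that cone, Farkas' lemma separates it by a
functional `n` that is nonnegative on `T - v`, i.e. by some `n ∈ N_v` with `n y < n v`.
So `T_v P = {y | ∀ n ∈ N_v, n v ≤ n y}`, and as the `σ_i` cover `N_v` this is `⋂ i, T_{σ_i}`. -/

noncomputable section
open Classical

open scoped BigOperators

/-- The (inner) normal cone of `P` at `v`. -/
def normalCone {d : ℕ} (P : Set (Fin d → ℚ)) (v : Fin d → ℚ) :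
    Set (Module.Dual ℚ (Fin d → ℚ)) :=
  {n | ∀ x ∈ P, n v ≤ n x}

namespace PointedCone

variable {𝕜 V : Type*} [Field 𝕜] [LinearOrder 𝕜] [IsStrictOrderedRing 𝕜]
  [AddCommGroup V] [Module 𝕜 V]

lemma nonneg_of_mem_hull {f : Module.Dual 𝕜 V} {s : Set V} (hf : ∀ u ∈ s, 0 ≤ f u) {w : V}
    (hw : w ∈ hull 𝕜 s) : 0 ≤ f w :=
  (Submodule.span_le (p := (positive 𝕜 𝕜).comap f)).2 hf hw

/-- Farkas' lemma. -/
theorem exists_dual_neg_of_notMem_hull_range {k : ℕ} (g : Fin k → V) {x : V}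
    (hx : x ∉ hull 𝕜 (Set.range g)) :
    ∃ f : Module.Dual 𝕜 V, (∀ i, 0 ≤ f (g i)) ∧ f x < 0 := by
  induction k generalizing x with
  | zero =>
    have hx0 : x ≠ 0 := by rintro rfl; exact hx (zero_mem _)
    obtain ⟨f, hf⟩ := Module.Projective.exists_dual_eq_one 𝕜 hx0
    exact ⟨-f, finZeroElim, by simp [hf]⟩
  | succ k ih =>
    obtain ⟨a, g, rfl⟩ : ∃ a g', g = Fin.cons a g' := ⟨_, _, (Fin.cons_self_tail g).symm⟩
    rw [Fin.range_cons] at hx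
    obtain ⟨f, hfg, hfx⟩ := ih g fun h ↦ hx (Submodule.span_mono (Set.subset_insert _ _) h)
    by_cases hfa : 0 ≤ f a
    · exact ⟨f, Fin.cases hfa hfg, hfx⟩
    push Not at hfa
    -- Project along `a` onto `ker f` and recurse on the projected generators.
    set L : V →ₗ[𝕜] V := LinearMap.id - (f a)⁻¹ • f.smulRight a with hL
    have hLz : ∀ z, L z = z - ((f a)⁻¹ * f z) • a := fun z ↦ by simp [hL, smul_smul]
    have hLa : L a = 0 := by rw [hLz, inv_mul_cancel₀ hfa.ne, one_smul, sub_self]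
    have hLx : L x ∉ hull 𝕜 (Set.range (L ∘ g)) := by
      intro h
      rw [Set.range_comp, hull, show ⇑L = ⇑(L.restrictScalars {c : 𝕜 // 0 ≤ c}) from rfl,
        Submodule.span_image] at h
      obtain ⟨w, hw, hLw⟩ := Submodule.mem_map.1 h
      have hfw : 0 ≤ f w := nonneg_of_mem_hull (Set.forall_mem_range.2 hfg) hw
      refine hx (Submodule.mem_span_insert.2
        ⟨⟨(f a)⁻¹ * (f x - f w), mul_nonneg_of_nonpos_of_nonpos (inv_nonpos.2 hfa.le)
          (by linarith)⟩, w, hw, ?_⟩)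
      simp only [LinearMap.restrictScalars_apply, hLz] at hLw
      rw [Nonneg.mk_smul, mul_sub, sub_smul]
      linear_combination (norm := module) -hLw
    obtain ⟨m, hmg, hmx⟩ := ih (L ∘ g) hLx
    exact ⟨m ∘ₗ L, Fin.cases (by simp [hLa]) hmg, hmx⟩

theorem exists_dual_neg_of_notMem_hull {s : Set V} (hs : s.Finite) {x : V}
    (hx : x ∉ hull 𝕜 s) : ∃ f : Module.Dual 𝕜 V, (∀ u ∈ s, 0 ≤ f u) ∧ f x < 0 := by
  obtain ⟨k, g, -, rfl⟩ := hs.fin_param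
  simpa only [Set.forall_mem_range] using exists_dual_neg_of_notMem_hull_range g hx

end PointedCone

namespace Convex

variable {𝕜 V : Type*} [Field 𝕜] [LinearOrder 𝕜] [IsStrictOrderedRing 𝕜]
  [AddCommGroup V] [Module 𝕜 V] {P : Set V} {v : V}

def feasibleCone (hP : Convex 𝕜 P) (hv : v ∈ P) : PointedCone 𝕜 V where
  carrier := {x | ∃ ε : 𝕜, 0 < ε ∧ v + ε • x ∈ P}
  zero_mem' := ⟨1, one_pos, by simpa using hv⟩
  add_mem' := by
    rintro x y ⟨ε, hε, hx⟩ ⟨δ, hδ, hy⟩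
    refine ⟨ε * δ / (ε + δ), by positivity, ?_⟩
    -- `v + εδ/(ε+δ) • (x + y)` is the combination of `v + ε • x` and `v + δ • y` with weights `δ : ε`.
    have hsum : δ / (ε + δ) + ε / (ε + δ) = 1 := by
      rw [← add_div, add_comm δ, div_self (by positivity)]
    convert hP hx hy (by positivity) (by positivity) hsum using 1
    nth_rewrite 1 [← one_smul 𝕜 v, ← hsum]
    module
  smul_mem' := by
    rintro ⟨c, hc⟩ x ⟨ε, hε, hx⟩
    rcases hc.eq_or_lt with rfl | hc
    · exact ⟨1, one_pos, by simpa using hv⟩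
    · refine ⟨ε / c, by positivity, ?_⟩
      rwa [Nonneg.mk_smul, smul_smul, div_mul_cancel₀ _ hc.ne']

lemma hull_image_sub_le_feasibleCone (hP : Convex 𝕜 P) (hv : v ∈ P) {T : Set V} (hT : T ⊆ P) :
    PointedCone.hull 𝕜 ((· - v) '' T) ≤ hP.feasibleCone hv :=
  Submodule.span_le.2 <| Set.image_subset_iff.2 fun t ht ↦
    ⟨1, one_pos, by simpa using hT ht⟩

end Convex

lemma IsVertex.mem {d : ℕ} {P : Set (Fin d → ℚ)} {v : Fin d → ℚ} (hv : IsVertex P v) :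
    v ∈ P := by
  obtain ⟨ℓ, hℓ⟩ := hv
  exact (hℓ.subset rfl).1

lemma mem_tangentCone_singleton {d : ℕ} {P : Set (Fin d → ℚ)} {v y : Fin d → ℚ} :
    y ∈ tangentCone P {v} ↔ ∃ ε : ℚ, 0 < ε ∧ v + ε • (y - v) ∈ P := by
  simp only [tangentCone, Set.mem_singleton_iff, exists_eq_left, Set.mem_ofPred_eq]
  exact ⟨fun ⟨x, hy, hx⟩ ↦ by rwa [hy, add_sub_cancel_left], fun h ↦ ⟨y - v, by abel, h⟩⟩

lemma le_of_mem_normalCone_of_mem_tangentCone {d : ℕ} {P : Set (Fin d → ℚ)}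
    {v y : Fin d → ℚ} {n : Module.Dual ℚ (Fin d → ℚ)} (hn : n ∈ normalCone P v)
    (hy : y ∈ tangentCone P {v}) : n v ≤ n y := by
  obtain ⟨ε, hε, hεy⟩ := mem_tangentCone_singleton.1 hy
  have := hn _ hεy
  simp only [map_add, map_smul, map_sub, smul_eq_mul, le_add_iff_nonneg_right] at this
  simpa using nonneg_of_mul_nonneg_right this hε

lemma mem_normalCone_convexHull {d : ℕ} {T : Set (Fin d → ℚ)} {v : Fin d → ℚ}
    {n : Module.Dual ℚ (Fin d → ℚ)} (hn : ∀ t ∈ T, n v ≤ n t) :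
    n ∈ normalCone (convexHull ℚ T) v :=
  fun _ hx ↦ convexHull_min hn (convex_halfSpace_ge n.isLinear (n v)) hx

theorem IsPolytope.tangentCone_eq {d : ℕ} {P : Set (Fin d → ℚ)} (hP : IsPolytope P)
    {v : Fin d → ℚ} (hv : v ∈ P) :
    tangentCone P {v} = {y | ∀ n ∈ normalCone P v, n v ≤ n y} := by
  refine Set.Subset.antisymm (fun y hy n hn ↦ le_of_mem_normalCone_of_mem_tangentCone hn hy) ?_
  intro y hy
  obtain ⟨T, rfl⟩ := hP
  have hcone : y - v ∈ PointedCone.hull ℚ ((· - v) '' (T : Set (Fin d → ℚ))) := by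
    by_contra h
    obtain ⟨n, hnT, hny⟩ :=
      PointedCone.exists_dual_neg_of_notMem_hull ((T.finite_toSet).image _) h
    have hnv : n ∈ normalCone (convexHull ℚ T) v := mem_normalCone_convexHull fun t ht ↦ by
      simpa using hnT _ ⟨t, ht, rfl⟩
    have := hy n hnv
    rw [map_sub] at hny
    linarith
  exact mem_tangentCone_singleton.2 <|
    (convex_convexHull ℚ _).hull_image_sub_le_feasibleCone hv (subset_convexHull ℚ _) hcone

theorem tangent_cone_eq_iInter_general {d : ℕ} (P : Set (Fin d → ℚ))
    (hP : IsPolytope P)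
    (v : Fin d → ℚ) (hv : IsVertex P v)
    (M : ℕ) (σ : Fin M → Set (Module.Dual ℚ (Fin d → ℚ)))
    (hcover : (⋃ i, σ i) = normalCone P v) :
    tangentCone P {v} = ⋂ i, {x : Fin d → ℚ | ∀ n ∈ σ i, n v ≤ n x} := by
  rw [hP.tangentCone_eq hv.mem, ← hcover]
  ext y
  simp only [Set.mem_ofPred_eq, Set.mem_iInter, Set.mem_iUnion]
  exact ⟨fun h i n hn ↦ h n ⟨i, hn⟩, fun h n ⟨i, hn⟩ ↦ h i n hn⟩

/-- **Tangent cone as intersection over a subdivision of the normal cone**: if the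
cones `σ_1, …, σ_M`, each finitely generated by elements of the normal cone `N_v`,
cover `N_v`, then `T_v P = ∩_i T_{σ_i}` where
`T_{σ_i} = {x : n(x) ≥ n(v) for all n ∈ σ_i}`. -/
theorem tangent_cone_eq_iInter {d : ℕ} (hd : 1 ≤ d) (P : Set (Fin d → ℚ))
    (hP : IsPolytope P) (hfull : affineSpan ℚ P = ⊤)
    (v : Fin d → ℚ) (hv : IsVertex P v)
    (M : ℕ) (σ : Fin M → Set (Module.Dual ℚ (Fin d → ℚ)))
    (hgen : ∀ i, ∃ (k : ℕ) (g : Fin k → Module.Dual ℚ (Fin d → ℚ)),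
      (∀ j, g j ∈ normalCone P v) ∧
      σ i = {n | ∃ c : Fin k → ℚ, (∀ j, 0 ≤ c j) ∧ n = ∑ j, c j • g j})
    (hcover : (⋃ i, σ i) = normalCone P v) :
    tangentCone P {v} = ⋂ i, {x : Fin d → ℚ | ∀ n ∈ σ i, n v ≤ n x} :=
  tangent_cone_eq_iInter_general P hP v hv M σ hcover
end
end

section
/- Uniqueness of positive conic decompositions: Let P ⊆ ℚ^d be a polytope with vertex set V, and let ξ ∈ (ℚ^d)^* take pairwise distinct values on the vertices of P. Suppose (f_v)_{v∈V} and (g_v)_{v∈V} are families of functions ℚ^d → ℚ such that (i) Σ_{v∈V} f_v = 1_P = Σ_{v∈V} g_v pointwise; (ii) each family is conic: for every v ∈ V and every t ∈ ℚ^d \ {0}, the values f_v(v + λt) and g_v(v + λt) are constant for λ > 0; and (iii) each family is positive: f_v(v + t) = g_v(v + t) = 0 whenever ξ(t) < 0. Then f_v = g_v for every vertex v. -/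
/-!
Put `h_v = f_v - g_v`: then `∑ h_v = 0`, and each `h_v` is again conic and positive at `v`.
Suppose some `h_w ≠ 0`, with `ξ w` minimal among such vertices. At a point `y` lying strictly
below (for `ξ`) every vertex above `w`, the terms `h_u y` with `ξ u < ξ w` vanish by minimality and
those with `ξ u > ξ w` by positivity, so `h_w y = -∑_{u ≠ w} h_u y = 0`. Every ray from `w` meets
such points near `w`, as there are only finitely many vertices, hence `h_w = 0` by conicity.
-/

noncomputable section
open Classical

open scoped BigOperators

/-- Indicator function of a set, with values in `ℚ`. -/
def indicatorQ {d : ℕ} (S : Set (Fin d → ℚ)) (x : Fin d → ℚ) : ℚ :=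
  if x ∈ S then 1 else 0

theorem IsVertex.mem_of_eq_convexHull {d : ℕ} {T : Finset (Fin d → ℚ)} {v : Fin d → ℚ}
    (hv : IsVertex (convexHull ℚ (T : Set (Fin d → ℚ))) v) : v ∈ T := by
  obtain ⟨ℓ, hℓ⟩ := hv
  obtain ⟨hvP, hvmax⟩ : v ∈ convexHull ℚ (T : Set (Fin d → ℚ)) ∧ _ := hℓ ▸ Set.mem_singleton v
  obtain ⟨y, hyT, hvy⟩ := (ℓ.convexOn (convex_convexHull ℚ _)).exists_ge_of_mem_convexHull
    (subset_convexHull ℚ _) hvP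
  have hy : y ∈ ({v} : Set (Fin d → ℚ)) :=
    hℓ ▸ ⟨subset_convexHull ℚ _ hyT, fun z hz => (hvmax z hz).trans hvy⟩
  exact Set.mem_singleton_iff.1 hy ▸ hyT

theorem IsPolytope.finite_setOf_isVertex {d : ℕ} {P : Set (Fin d → ℚ)} (hP : IsPolytope P) :
    {v | IsVertex P v}.Finite := by
  obtain ⟨T, rfl⟩ := hP
  exact T.finite_toSet.subset fun _ hv => hv.mem_of_eq_convexHull

section ConicDecomposition

variable (𝕜 : Type*) {E M : Type*} [Field 𝕜] [LinearOrder 𝕜] [AddCommGroup E] [Module 𝕜 E]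

def IsConicAt [AddCommMonoid M] (φ : E → M) (v : E) : Prop :=
  ∀ t : E, t ≠ 0 → ∀ lam mu : 𝕜, 0 < lam → 0 < mu → φ (v + lam • t) = φ (v + mu • t)

variable {𝕜}

def IsPositiveAt [AddCommMonoid M] (ξ : Module.Dual 𝕜 E) (φ : E → M) (v : E) : Prop :=
  ∀ t : E, ξ t < 0 → φ (v + t) = 0

theorem IsConicAt.sub [AddCommGroup M] {φ ψ : E → M} {v : E} (hφ : IsConicAt 𝕜 φ v)
    (hψ : IsConicAt 𝕜 ψ v) : IsConicAt 𝕜 (φ - ψ) v :=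
  fun t ht lam mu hlam hmu => by simp only [Pi.sub_apply, hφ t ht lam mu hlam hmu,
    hψ t ht lam mu hlam hmu]

theorem IsPositiveAt.sub [AddCommGroup M] {ξ : Module.Dual 𝕜 E} {φ ψ : E → M} {v : E}
    (hφ : IsPositiveAt ξ φ v) (hψ : IsPositiveAt ξ ψ v) : IsPositiveAt ξ (φ - ψ) v :=
  fun t ht => by simp only [Pi.sub_apply, hφ t ht, hψ t ht, sub_self]

theorem IsConicAt.apply_eq_apply_add_smul_sub [IsStrictOrderedRing 𝕜] [AddCommMonoid M] {φ : E → M} {v : E}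
    (hφ : IsConicAt 𝕜 φ v) (x : E) {lam : 𝕜} (hlam : 0 < lam) : φ x = φ (v + lam • (x - v)) := by
  rcases eq_or_ne x v with rfl | hxv
  · simp
  · simpa using hφ (x - v) (sub_ne_zero.2 hxv) 1 lam one_pos hlam

theorem exists_pos_forall_add_mul_lt [IsStrictOrderedRing 𝕜] {ι : Type*} {V : Set ι} (hV : V.Finite) {a : 𝕜}
    {b : ι → 𝕜} (hab : ∀ i ∈ V, a < b i) (c : 𝕜) : ∃ lam > 0, ∀ i ∈ V, a + c * lam < b i := by
  rcases V.eq_empty_or_nonempty with rfl | hne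
  · exact ⟨1, one_pos, by simp⟩
  obtain ⟨j, hj, hmin⟩ := V.exists_min_image b hV hne
  obtain ⟨lam, hlam, hlt⟩ := exists_pos_mul_lt (sub_pos.2 (hab j hj)) c
  exact ⟨lam, hlam, fun i hi => by linarith [hmin i hi]⟩

theorem eq_zero_of_finsum_eq_zero_of_isConicAt_of_isPositiveAt [IsStrictOrderedRing 𝕜]
    [AddCommMonoid M] {V : Set E}
    (hV : V.Finite) {ξ : Module.Dual 𝕜 E} (hξ : Set.InjOn ξ V) {h : E → E → M}
    (hsum : ∀ x, ∑ᶠ v ∈ V, h v x = 0) (hconic : ∀ v ∈ V, IsConicAt 𝕜 (h v) v)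
    (hpos : ∀ v ∈ V, IsPositiveAt ξ (h v) v) : ∀ v ∈ V, h v = 0 := by
  by_contra! hbad
  obtain ⟨w, ⟨hw, hw0⟩, hmin⟩ :=
    Set.exists_min_image {v ∈ V | h v ≠ 0} ξ (hV.subset fun _ hv => hv.1) hbad
  have hbelow : ∀ u ∈ V, ξ u < ξ w → h u = 0 := fun u hu hlt =>
    by_contra fun hu0 => (hmin u ⟨hu, hu0⟩).not_gt hlt
  have hzero_below : ∀ y, (∀ u ∈ V, ξ w < ξ u → ξ y < ξ u) → h w y = 0 := by
    intro y hy
    rw [← hsum y, finsum_mem_eq_finite_toFinset_sum _ hV,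
      Finset.sum_eq_single_of_mem w (hV.mem_toFinset.2 hw)]
    intro u hu huw
    rw [hV.mem_toFinset] at hu
    rcases lt_trichotomy (ξ u) (ξ w) with hlt | heq | hgt
    · rw [hbelow u hu hlt, Pi.zero_apply]
    · exact absurd (hξ hu hw heq) huw
    · simpa using hpos u hu (y - u) (by simpa [map_sub] using hy u hu hgt)
  refine hw0 (funext fun x => ?_)
  obtain ⟨lam, hlam, hlt⟩ := exists_pos_forall_add_mul_lt (V := {u ∈ V | ξ w < ξ u}) (hV.subset fun _ hu => hu.1)
    (fun u hu => hu.2) (ξ (x - w))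
  rw [(hconic w hw).apply_eq_apply_add_smul_sub x hlam, Pi.zero_apply]
  exact hzero_below _ fun u hu hgt => by simpa [mul_comm] using hlt u ⟨hu, hgt⟩

end ConicDecomposition

theorem positive_conic_decomposition_unique_general {d : ℕ}
    (P : Set (Fin d → ℚ)) (hP : IsPolytope P)
    (ξ : Module.Dual ℚ (Fin d → ℚ))
    (hξ : ∀ v w : Fin d → ℚ, IsVertex P v → IsVertex P w → ξ v = ξ w → v = w)
    (f g : (Fin d → ℚ) → (Fin d → ℚ) → ℚ)
    (hfsum : ∀ x, (∑ᶠ v ∈ {v : Fin d → ℚ | IsVertex P v}, f v x) = indicatorQ P x)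
    (hgsum : ∀ x, (∑ᶠ v ∈ {v : Fin d → ℚ | IsVertex P v}, g v x) = indicatorQ P x)
    (hfconic : ∀ v, IsVertex P v → ∀ t : Fin d → ℚ, t ≠ 0 →
      ∀ lam mu : ℚ, 0 < lam → 0 < mu → f v (v + lam • t) = f v (v + mu • t))
    (hgconic : ∀ v, IsVertex P v → ∀ t : Fin d → ℚ, t ≠ 0 →
      ∀ lam mu : ℚ, 0 < lam → 0 < mu → g v (v + lam • t) = g v (v + mu • t))
    (hfpos : ∀ v, IsVertex P v → ∀ t : Fin d → ℚ, ξ t < 0 → f v (v + t) = 0)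
    (hgpos : ∀ v, IsVertex P v → ∀ t : Fin d → ℚ, ξ t < 0 → g v (v + t) = 0) :
    ∀ v, IsVertex P v → f v = g v := by
  have hV := hP.finite_setOf_isVertex
  have hsum : ∀ x, ∑ᶠ v ∈ {v | IsVertex P v}, (f - g) v x = 0 := fun x => by
    simp only [Pi.sub_apply, finsum_mem_sub_distrib _ _ hV, hfsum, hgsum, sub_self]
  have hzero := eq_zero_of_finsum_eq_zero_of_isConicAt_of_isPositiveAt hV
    (fun v hv w hw => hξ v w hv hw) hsum
    (fun v hv => IsConicAt.sub (hfconic v hv) (hgconic v hv))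
    (fun v hv => IsPositiveAt.sub (hfpos v hv) (hgpos v hv))
  exact fun v hv => sub_eq_zero.1 (hzero v hv)

/-- **Uniqueness of positive conic decompositions**: if `ξ` separates the vertices of
a polytope `P`, then any two decompositions `1_P = Σ_v f_v = Σ_v g_v` into functions
that are conic and `ξ`-positive at the respective vertices agree termwise. -/
theorem positive_conic_decomposition_unique {d : ℕ} (hd : 1 ≤ d)
    (P : Set (Fin d → ℚ)) (hP : IsPolytope P)
    (ξ : Module.Dual ℚ (Fin d → ℚ))
    (hξ : ∀ v w : Fin d → ℚ, IsVertex P v → IsVertex P w → ξ v = ξ w → v = w)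
    (f g : (Fin d → ℚ) → (Fin d → ℚ) → ℚ)
    (hfsum : ∀ x, (∑ᶠ v ∈ {v : Fin d → ℚ | IsVertex P v}, f v x) = indicatorQ P x)
    (hgsum : ∀ x, (∑ᶠ v ∈ {v : Fin d → ℚ | IsVertex P v}, g v x) = indicatorQ P x)
    (hfconic : ∀ v, IsVertex P v → ∀ t : Fin d → ℚ, t ≠ 0 →
      ∀ lam mu : ℚ, 0 < lam → 0 < mu → f v (v + lam • t) = f v (v + mu • t))
    (hgconic : ∀ v, IsVertex P v → ∀ t : Fin d → ℚ, t ≠ 0 →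
      ∀ lam mu : ℚ, 0 < lam → 0 < mu → g v (v + lam • t) = g v (v + mu • t))
    (hfpos : ∀ v, IsVertex P v → ∀ t : Fin d → ℚ, ξ t < 0 → f v (v + t) = 0)
    (hgpos : ∀ v, IsVertex P v → ∀ t : Fin d → ℚ, ξ t < 0 → g v (v + t) = 0) :
    ∀ v, IsVertex P v → f v = g v :=
  positive_conic_decomposition_unique_general P hP ξ hξ f g hfsum hgsum hfconic hgconic hfpos hgpos
end
end
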